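/- The Max Swap Game on a tree with n vertices under the max cost policy converges to a stable tree within O(n log n) moves: each agent, once it becomes a maximum-cost agent with eccentricity c, can perform at most O(log c) best-response moves before reaching eccentricity at most 3, since each best-response swap of a leaf agent with eccentricity c reduces its eccentricity to at most ⌈c/2⌉ + 1. -/

import Mathlib

/-!
An improving swap never brings the mover's cost down to `1` (it would have to be adjacent to
everybody already), so every mover has cost at least `3`. Under the max cost policy this forces
the mover's cost to be the diameter `D`: a vertex of cost `D ≥ 4` can always improve, by
re-attaching to the middle of a diametral path, which gives cost `⌈D/2⌉ + 1`. A vertex of maximum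
cost is a leaf, and swapping a leaf's edge changes no distance between the other vertices, so the
other agents' costs rise at most to the mover's new cost, and the diameter never increases. Hence
an agent that moved with cost `c` never again has cost above `⌈c/2⌉ + 1`: along its successive
moves `c - 2` is halved (rounding up) and strictly decreases, so it moves at most `⌈log₂ n⌉ + 1`
times.
-/

namespace NCG
open SimpleGraph

variable {V : Type*}

/-- Eccentricity of a vertex: maximum graph distance to any other vertex. -/
noncomputable def ecc [Fintype V] (G : SimpleGraph V) (x : V) : ℕ :=
  Finset.univ.sup fun y => G.dist x y

/-- Diameter: maximum eccentricity. -/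
noncomputable def diam [Fintype V] (G : SimpleGraph V) : ℕ :=
  Finset.univ.sup fun x => ecc G x

/-- Radius: minimum eccentricity. -/
noncomputable def rad [Fintype V] (G : SimpleGraph V) : ℕ :=
  sInf (Set.range (ecc G))

/-- A swap move of agent v: replace one incident tree edge {v,u} by {v,w},
keeping the network a tree. -/
def IsSwapMove [Fintype V] (T T' : SimpleGraph V) (v : V) : Prop :=
  T'.IsTree ∧ ∃ u w : V, T.Adj v u ∧
    T'.edgeSet = (T.edgeSet \ {s(v, u)}) ∪ {s(v, w)}

/-- An improving move: a swap strictly decreasing the mover's eccentricity. -/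
def IsImproving [Fintype V] (T T' : SimpleGraph V) (v : V) : Prop :=
  IsSwapMove T T' v ∧ ecc T' v < ecc T v

/-- An agent is unhappy if it has an improving swap. -/
def Unhappy [Fintype V] (T : SimpleGraph V) (v : V) : Prop :=
  ∃ T', IsImproving T T' v

/-- A tree is stable if no agent has an improving swap. -/
def Stable [Fintype V] (T : SimpleGraph V) : Prop :=
  ∀ v, ¬ Unhappy T v

/-- A step of the Max Swap Game under the max cost policy: an unhappy agent of
maximum cost among unhappy agents performs a best-response improving swap. -/
def MaxCostBRStep [Fintype V] (T T' : SimpleGraph V) : Prop :=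
  ∃ v, Unhappy T v ∧ (∀ x, Unhappy T x → ecc T x ≤ ecc T v) ∧
    IsImproving T T' v ∧
    ∀ T'', IsImproving T T'' v → ecc T' v ≤ ecc T'' v

end NCG

namespace SimpleGraph
variable {V : Type*} {G G' : SimpleGraph V} {x y z m v : V}

theorem Walk.dist_add_dist_le_length (p : G.Walk x z) (hm : m ∈ p.support) :
    G.dist x m + G.dist m z ≤ p.length := by
  classical
  rw [← p.take_spec hm, Walk.length_append]
  exact add_le_add (dist_le _) (dist_le _)

theorem IsAcyclic.support_subset_support (hG : G.IsAcyclic) {p : G.Walk x y} (hp : p.IsPath)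
    (q : G.Walk x y) : p.support ⊆ q.support := by
  classical
  obtain rfl : p = q.bypass :=
    congrArg Subtype.val ((hG.subsingleton_path x y).elim ⟨p, hp⟩ ⟨q.bypass, q.bypass_isPath⟩)
  exact q.support_bypass_subset_support

/-- A shortest path between vertices other than the leaf `v` avoids `v`. -/
theorem Reachable.exists_walk_length_eq_dist_of_leaf (hxy : G.Reachable x y)
    (hv : (G.neighborSet v).Subsingleton) (hx : x ≠ v) (hy : y ≠ v)
    (hE : ∀ e ∈ G.edgeSet, v ∉ e → e ∈ G'.edgeSet) :
    ∃ q : G'.Walk x y, q.length = G.dist x y := by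
  obtain ⟨p, hp, hl⟩ := hxy.exists_path_of_dist
  have hvp := hp.isTrail.not_mem_support_of_subsingleton_neighborSet hx.symm hy.symm hv
  refine ⟨p.transfer G' fun e he => hE e (p.edges_subset_edgeSet he) fun hve => ?_, by simp [hl]⟩
  induction e with
  | h a b =>
    rcases Sym2.mem_iff.1 hve with rfl | rfl
    · exact hvp (p.fst_mem_support_of_mem_edges he)
    · exact hvp (p.snd_mem_support_of_mem_edges he)

/-- In a tree, a vertex `m` of a diametral path lies on the path from `x` or on the path from
`y` to any `z`; taking `m` at the middle of the path gives the bound. -/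
theorem IsTree.exists_dist_le_half (hG : G.IsTree) (hx : ∀ z, G.dist x z ≤ G.dist x y)
    (hy : ∀ z, G.dist z y ≤ G.dist x y) : ∃ m, ∀ z, G.dist m z ≤ (G.dist x y + 1) / 2 := by
  set D := G.dist x y
  obtain ⟨P, hP, hPl⟩ := hG.connected.exists_path_of_dist x y
  have hxm : G.dist x (P.getVert (D / 2)) ≤ D / 2 := (dist_le (P.take (D / 2))).trans (by simp)
  have hmy : G.dist (P.getVert (D / 2)) y ≤ D - D / 2 :=
    (dist_le (P.drop (D / 2))).trans (by rw [Walk.drop_length, hPl])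
  have hxy : D ≤ G.dist x (P.getVert (D / 2)) + G.dist (P.getVert (D / 2)) y :=
    hG.connected.dist_triangle
  refine ⟨P.getVert (D / 2), fun z => ?_⟩
  obtain ⟨q₁, -, hl₁⟩ := hG.connected.exists_path_of_dist x z
  obtain ⟨q₂, -, hl₂⟩ := hG.connected.exists_path_of_dist z y
  have hm := hG.isAcyclic.support_subset_support hP (q₁.append q₂) (P.getVert_mem_support (D / 2))
  rcases (Walk.mem_support_append_iff _ _).1 hm with hm | hm
  · have := q₁.dist_add_dist_le_length hm
    have := hx z
    omega
  · have := q₂.dist_add_dist_le_length hm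
    have := hy z
    rw [dist_comm]
    omega

section Swap
variable {T T' : SimpleGraph V} {u w : V}

theorem neighborSet_subset_of_edgeSet_eq
    (hE : T'.edgeSet = T.edgeSet \ {s(v, u)} ∪ {s(v, w)}) :
    T'.neighborSet v ⊆ insert w (T.neighborSet v \ {u}) := by
  intro a ha
  rw [mem_neighborSet, ← mem_edgeSet, hE] at ha
  rcases ha with ⟨ha, hau⟩ | ha
  · exact Or.inr ⟨ha, fun h => hau (by rw [Set.mem_singleton_iff.1 h]; rfl)⟩
  · exact Or.inl (Sym2.congr_right.1 ha)

theorem mem_edgeSet_iff_of_edgeSet_eq (hE : T'.edgeSet = T.edgeSet \ {s(v, u)} ∪ {s(v, w)})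
    {e : Sym2 V} (he : v ∉ e) : e ∈ T'.edgeSet ↔ e ∈ T.edgeSet := by
  rw [hE]
  aesop

theorem dist_eq_of_edgeSet_eq (hT : T.Connected) (hT' : T'.Connected) (hvu : T.Adj v u)
    (hv : (T.neighborSet v).Subsingleton) (hE : T'.edgeSet = T.edgeSet \ {s(v, u)} ∪ {s(v, w)})
    (hx : x ≠ v) (hy : y ≠ v) : T'.dist x y = T.dist x y := by
  have hv' : (T'.neighborSet v).Subsingleton := by
    refine (Set.subsingleton_singleton (a := w)).anti fun a ha => ?_
    rcases neighborSet_subset_of_edgeSet_eq hE ha with rfl | ⟨ha, hau⟩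
    · rfl
    · exact absurd (hv ha hvu) hau
  obtain ⟨p, hp⟩ := (hT x y).exists_walk_length_eq_dist_of_leaf hv hx hy
    fun e he hve => (mem_edgeSet_iff_of_edgeSet_eq hE hve).2 he
  obtain ⟨q, hq⟩ := (hT' x y).exists_walk_length_eq_dist_of_leaf hv' hx hy
    fun e he hve => (mem_edgeSet_iff_of_edgeSet_eq hE hve).1 he
  exact le_antisymm (hp ▸ dist_le p) (hq ▸ dist_le q)

theorem IsTree.exists_swap (hT : T.IsTree) (hvu : T.Adj v u)
    (hv : (T.neighborSet v).Subsingleton) (hw : w ≠ v) :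
    ∃ T' : SimpleGraph V, T'.IsTree ∧
      T'.edgeSet = T.edgeSet \ {s(v, u)} ∪ {s(v, w)} ∧ T'.Adj v w := by
  set T₀ := T.deleteEdges {s(v, u)}
  have hE : (T₀ ⊔ edge v w).edgeSet = T.edgeSet \ {s(v, u)} ∪ {s(v, w)} := by
    rw [edgeSet_sup, edgeSet_deleteEdges, edgeSet_edge_of_ne hw.symm]
  have hvw : (T₀ ⊔ edge v w).Adj v w := Or.inr ((edge_adj v w v w).2 ⟨Or.inl ⟨rfl, rfl⟩, hw.symm⟩)
  have hnreach : ¬ T₀.Reachable v w := by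
    rintro ⟨p⟩
    cases p with
    | nil => exact hw rfl
    | cons ha _ =>
      rw [deleteEdges_adj] at ha
      exact ha.2 (by rw [hv ha.1 hvu]; rfl)
  have hconn : (T₀ ⊔ edge v w).Connected := by
    refine (connected_iff_exists_forall_reachable _).2 ⟨w, fun x => ?_⟩
    rcases eq_or_ne x v with rfl | hx
    · exact hvw.symm.reachable
    · obtain ⟨p, -⟩ := (hT.connected w x).exists_walk_length_eq_dist_of_leaf hv hw hx
        fun e he hve => (mem_edgeSet_iff_of_edgeSet_eq hE hve).2 he
      exact ⟨p⟩
  exact ⟨_, ⟨hconn, (hT.isAcyclic.anti (deleteEdges_le _)).sup_edge_of_not_reachable hnreach⟩,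
    hE, hvw⟩

end Swap

end SimpleGraph

open Finset in
theorem Finset.card_le_clog_of_halving {ι : Type*} [LinearOrder ι] {s : Finset ι} {e : ι → ℕ}
    {N : ℕ} (hN : ∀ i ∈ s, e i ≤ N) (hpos : ∀ i ∈ s, 1 ≤ e i)
    (hhalf : ∀ i ∈ s, ∀ j ∈ s, i < j → e j < e i ∧ e j ≤ (e i + 1) / 2) :
    #s ≤ Nat.clog 2 N + 1 := by
  have hanti : StrictAntiOn (fun i => Nat.clog 2 (e i)) s := by
    intro i hi j hj hij
    obtain ⟨hlt, hle⟩ := hhalf i hi j hj hij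
    have h2 : 2 ≤ e i := by have := hpos j hj; omega
    calc Nat.clog 2 (e j) ≤ Nat.clog 2 ((e i + 1) / 2) := Nat.clog_mono_right 2 hle
      _ < Nat.clog 2 (e i) := by rw [Nat.clog_of_two_le one_lt_two h2]; exact Nat.lt_succ_self _
  calc #s ≤ #(range (Nat.clog 2 N + 1)) :=
        card_le_card_of_injOn _ (fun i hi => by
          simpa [Nat.lt_succ_iff] using Nat.clog_mono_right 2 (hN i hi)) hanti.injOn
    _ = Nat.clog 2 N + 1 := card_range _

theorem Nat.clog_two_add_one_le_log {n : ℕ} (hn : 2 ≤ n) :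
    ((Nat.clog 2 n + 1 : ℕ) : ℝ) ≤ 5 * Real.log n := by
  have hk : 2 ^ (Nat.clog 2 n - 1) < n := Nat.pow_pred_clog_lt_self one_lt_two hn
  have hk1 : 1 ≤ Nat.clog 2 n := Nat.clog_pos one_lt_two hn
  have hlog : ((Nat.clog 2 n - 1 : ℕ) : ℝ) * Real.log 2 ≤ Real.log n := by
    rw [← Real.log_pow]
    exact Real.log_le_log (by positivity) (by exact_mod_cast hk.le)
  have hlogn : Real.log 2 ≤ Real.log n := Real.log_le_log (by norm_num) (by exact_mod_cast hn)
  have := Real.log_two_gt_d9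
  push_cast [hk1] at hlog ⊢
  nlinarith

namespace NCG
open SimpleGraph

variable {V : Type*}

section Eccentricity
variable [Fintype V] {G : SimpleGraph V} {x v : V} {k : ℕ}

theorem dist_le_ecc (G : SimpleGraph V) (x y : V) : G.dist x y ≤ ecc G x :=
  Finset.le_sup (Finset.mem_univ y)

theorem ecc_le_iff : ecc G x ≤ k ↔ ∀ y, G.dist x y ≤ k := by
  simp [ecc]

theorem ecc_le_diam (G : SimpleGraph V) (x : V) : ecc G x ≤ diam G :=
  Finset.le_sup (f := ecc G) (Finset.mem_univ x)

theorem diam_le_iff : diam G ≤ k ↔ ∀ x, ecc G x ≤ k := by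
  simp [diam]

theorem exists_ecc_eq_dist (G : SimpleGraph V) (x : V) : ∃ y, ecc G x = G.dist x y := by
  obtain ⟨y, -, hy⟩ := Finset.exists_mem_eq_sup Finset.univ ⟨x, Finset.mem_univ x⟩ (G.dist x)
  exact ⟨y, hy⟩

theorem exists_ecc_eq_diam [Nonempty V] (G : SimpleGraph V) : ∃ x, ecc G x = diam G := by
  obtain ⟨x, -, hx⟩ := Finset.exists_mem_eq_sup Finset.univ Finset.univ_nonempty (ecc G)
  exact ⟨x, hx.symm⟩

theorem ecc_le_one_iff (hG : G.Connected) : ecc G x ≤ 1 ↔ ∀ y, x ≠ y → G.Adj x y := by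
  rw [ecc_le_iff]
  refine ⟨fun h y hy => dist_eq_one_iff_adj.1 ?_, fun h y => ?_⟩
  · exact le_antisymm (h y) (hG.pos_dist_of_ne hy)
  · rcases eq_or_ne x y with rfl | hy
    · simp
    · exact (dist_eq_one_iff_adj.2 (h y hy)).le

theorem ecc_le_card_sub_one (hG : G.Connected) (x : V) : ecc G x ≤ Fintype.card V - 1 := by
  refine ecc_le_iff.2 fun y => ?_
  obtain ⟨p, hp, hl⟩ := hG.exists_path_of_dist x y
  have := hp.length_lt
  omega

theorem neighborSet_subsingleton_of_ecc_max (hG : G.IsTree)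
    (hmax : ∀ x, ecc G x ≤ ecc G v) : (G.neighborSet v).Subsingleton := by
  obtain ⟨y, hy⟩ := exists_ecc_eq_dist G v
  obtain ⟨P, hP, -⟩ := hG.connected.exists_path_of_dist y v
  suffices ∀ a, G.Adj v a → a = P.penultimate from
    fun a ha b hb => (this a ha).trans (this b hb).symm
  intro a ha
  have hlt : G.dist y a < G.dist y v := by
    refine lt_of_le_of_ne ?_ (hG.dist_ne_of_adj y ha.symm)
    rw [dist_comm, dist_comm (u := y), ← hy]
    exact (dist_le_ecc G a y).trans (hmax a)
  obtain ⟨q, hq, hql⟩ := hG.connected.exists_path_of_dist y a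
  have hvq : v ∉ q.support := fun hv => by
    have := q.dist_add_dist_le_length hv
    omega
  exact hG.isAcyclic.eq_penultimate_of_adj_end hP ha
    (hG.isAcyclic.mem_support_of_ne_mem_support_of_adj_of_isPath hP hq ha hvq)

end Eccentricity

section Swap
variable [Fintype V] {T T' : SimpleGraph V} {u v w z : V}

theorem ecc_le_max_of_edgeSet_eq (hT : T.Connected) (hT' : T'.Connected) (hvu : T.Adj v u)
    (hv : (T.neighborSet v).Subsingleton) (hE : T'.edgeSet = T.edgeSet \ {s(v, u)} ∪ {s(v, w)})
    (x : V) : ecc T' x ≤ max (ecc T x) (ecc T' v) := by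
  rcases eq_or_ne x v with rfl | hx
  · exact le_max_right _ _
  refine ecc_le_iff.2 fun y => ?_
  rcases eq_or_ne y v with rfl | hy
  · exact dist_comm.trans_le ((dist_le_ecc T' y x).trans (le_max_right _ _))
  · rw [dist_eq_of_edgeSet_eq hT hT' hvu hv hE hx hy]
    exact (dist_le_ecc T x y).trans (le_max_left _ _)

/-- The new neighbours of the mover are its old ones with `u` replaced by `w`, so it cannot become
adjacent to everybody unless it already was. -/
theorem IsSwapMove.ecc_le_one (h : IsSwapMove T T' v) (h1 : ecc T' v ≤ 1) : ecc T v ≤ 1 := by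
  obtain ⟨hT', u, w, hvu, hE⟩ := h
  have hadj := (ecc_le_one_iff hT'.connected).1 h1
  have hnbr : ∀ y, v ≠ y → y = w ∨ T.Adj v y ∧ y ≠ u := fun y hy =>
    by simpa using neighborSet_subset_of_edgeSet_eq hE (hadj y hy)
  have huw : u = w := by simpa using hnbr u hvu.ne
  refine ecc_le_iff.2 fun y => ?_
  rcases eq_or_ne v y with rfl | hy
  · simp
  · refine (dist_eq_one_iff_adj.2 ?_).le
    rcases hnbr y hy with rfl | ⟨hy, -⟩
    · exact huw ▸ hvu
    · exact hy

theorem IsImproving.two_le_ecc (h : IsImproving T T' v) : 2 ≤ ecc T' v := by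
  by_contra! h1
  have hT := h.1.ecc_le_one (by omega)
  have hT' : ecc T' v = 0 := by have := h.2; omega
  suffices ecc T v = 0 by have := h.2; omega
  refine Nat.le_zero.1 (ecc_le_iff.2 fun y => ?_)
  have hy := (h.1.1.connected.dist_eq_zero_iff).1 (Nat.le_zero.1 (hT' ▸ dist_le_ecc T' v y))
  simp [hy]

/-- Re-attach the leaf `z` to a middle vertex of a diametral path starting at `z`. -/
theorem exists_isImproving_of_four_le_diam (hT : T.IsTree) (hD : 4 ≤ diam T)
    (hz : ecc T z = diam T) : ∃ T', IsImproving T T' z ∧ ecc T' z ≤ (diam T + 1) / 2 + 1 := by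
  obtain ⟨y, hy⟩ := exists_ecc_eq_dist T z
  obtain ⟨c, hc⟩ := hT.exists_dist_le_half (x := z) (y := y) (fun t => hy ▸ dist_le_ecc T z t)
    fun t => dist_comm.trans_le ((dist_le_ecc T y t).trans (hy ▸ hz ▸ ecc_le_diam T y))
  rw [← hy, hz] at hc
  have hcz : c ≠ z := by
    rintro rfl
    have := hc y
    omega
  have hzy : z ≠ y := by
    rintro rfl
    simp at hy
    omega
  obtain ⟨p⟩ := hT.connected z y
  have hzu := p.adj_snd (Walk.not_nil_of_ne hzy)
  have hleaf := neighborSet_subsingleton_of_ecc_max hT fun x => hz ▸ ecc_le_diam T x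
  obtain ⟨T', hT', hE, hzc⟩ := hT.exists_swap hzu hleaf hcz
  have hc' : ∀ t, T'.dist c t ≤ (diam T + 1) / 2 := by
    intro t
    rcases eq_or_ne t z with rfl | ht
    · rw [dist_comm, dist_eq_one_iff_adj.2 hzc]
      omega
    · rw [dist_eq_of_edgeSet_eq hT.connected hT'.connected hzu hleaf hE hcz ht]
      exact hc t
  have hecc : ecc T' z ≤ (diam T + 1) / 2 + 1 := ecc_le_iff.2 fun t => by
    have := hT'.connected.dist_triangle (u := z) (v := c) (w := t)
    rw [dist_eq_one_iff_adj.2 hzc] at this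
    have := hc' t
    omega
  exact ⟨T', ⟨⟨hT', p.snd, c, hzu, hE⟩, by omega⟩, hecc⟩

end Swap

section Step
variable [Fintype V] {T T' : SimpleGraph V} {v : V}

-- `MaxCostBRStep T T'` is `∃ v, MaxCostBRStepBy T T' v` by definition.
def MaxCostBRStepBy (T T' : SimpleGraph V) (v : V) : Prop :=
  Unhappy T v ∧ (∀ x, Unhappy T x → ecc T x ≤ ecc T v) ∧
    IsImproving T T' v ∧ ∀ T'', IsImproving T T'' v → ecc T' v ≤ ecc T'' v

-- `(D + 1) / 2 + 1 = ⌈D/2⌉ + 1`; the bound `D - 1` only matters for `D = 3`.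
def costBound (D : ℕ) : ℕ := min (D - 1) ((D + 1) / 2 + 1)

theorem costBound_mono : Monotone costBound := fun _ _ h => by
  unfold costBound
  omega

namespace MaxCostBRStepBy

theorem isImproving (h : MaxCostBRStepBy T T' v) : IsImproving T T' v := h.2.2.1

theorem three_le_ecc (h : MaxCostBRStepBy T T' v) : 3 ≤ ecc T v := by
  have := h.isImproving.two_le_ecc
  have := h.isImproving.2
  omega

theorem ecc_eq_diam (h : MaxCostBRStepBy T T' v) (hT : T.IsTree) : ecc T v = diam T := by
  refine le_antisymm (ecc_le_diam T v) ?_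
  by_cases hD : 4 ≤ diam T
  · have : Nonempty V := ⟨v⟩
    obtain ⟨z, hz⟩ := exists_ecc_eq_diam T
    obtain ⟨T'', hT'', -⟩ := exists_isImproving_of_four_le_diam hT hD hz
    exact hz ▸ h.2.1 z ⟨T'', hT''⟩
  · have := h.three_le_ecc
    omega

theorem ecc_le_costBound (h : MaxCostBRStepBy T T' v) (hT : T.IsTree) :
    ecc T' v ≤ costBound (diam T) := by
  have hlt := h.isImproving.2
  have heq := h.ecc_eq_diam hT
  have : ecc T' v ≤ (diam T + 1) / 2 + 1 := by
    by_cases hD : 4 ≤ diam T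
    · obtain ⟨T'', hT'', hle⟩ := exists_isImproving_of_four_le_diam hT hD heq
      exact (h.2.2.2 T'' hT'').trans hle
    · omega
  unfold costBound
  omega

theorem ecc_le_max (h : MaxCostBRStepBy T T' v) (hT : T.IsTree) (x : V) :
    ecc T' x ≤ max (ecc T x) (ecc T' v) := by
  obtain ⟨⟨hT', u, w, hvu, hE⟩, -⟩ := h.isImproving
  have hleaf := neighborSet_subsingleton_of_ecc_max hT fun x => h.ecc_eq_diam hT ▸ ecc_le_diam T x
  exact ecc_le_max_of_edgeSet_eq hT.connected hT'.connected hvu hleaf hE x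

theorem diam_le (h : MaxCostBRStepBy T T' v) (hT : T.IsTree) : diam T' ≤ diam T :=
  diam_le_iff.2 fun x => (h.ecc_le_max hT x).trans <|
    max_le (ecc_le_diam T x) (h.isImproving.2.le.trans (h.ecc_eq_diam hT).le)

end MaxCostBRStepBy

end Step

section Play
open Finset
variable [Fintype V] {F : ℕ → SimpleGraph V} {mover : ℕ → V} {L : ℕ}

structure IsMaxCostPlay (F : ℕ → SimpleGraph V) (mover : ℕ → V) (L : ℕ) : Prop where
  isTree_zero : (F 0).IsTree
  step : ∀ i < L, MaxCostBRStepBy (F i) (F (i + 1)) (mover i)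

theorem exists_isMaxCostPlay (f : Fin (L + 1) → SimpleGraph V) (h0 : (f 0).IsTree)
    (hsteps : ∀ i : Fin L, MaxCostBRStep (f i.castSucc) (f i.succ)) :
    ∃ (F : ℕ → SimpleGraph V) (mover : ℕ → V), IsMaxCostPlay F mover L := by
  have : Nonempty V := h0.connected.nonempty
  set F : ℕ → SimpleGraph V := fun i => f ⟨min i L, by omega⟩
  have hstep : ∀ i < L, ∃ v, MaxCostBRStepBy (F i) (F (i + 1)) v := fun i hi => by
    have h1 : F i = f (⟨i, hi⟩ : Fin L).castSucc := congrArg f (Fin.ext (min_eq_left hi.le))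
    have h2 : F (i + 1) = f (⟨i, hi⟩ : Fin L).succ := congrArg f (Fin.ext (min_eq_left hi))
    rw [h1, h2]
    exact hsteps ⟨i, hi⟩
  choose! mover hmover using hstep
  exact ⟨F, mover, ⟨by simpa [F] using h0, hmover⟩⟩

namespace IsMaxCostPlay

theorem isTree (hP : IsMaxCostPlay F mover L) {i : ℕ} (hi : i ≤ L) : (F i).IsTree := by
  cases i with
  | zero => exact hP.isTree_zero
  | succ i => exact (hP.step i (by omega)).isImproving.1.1

theorem diam_anti (hP : IsMaxCostPlay F mover L) {i j : ℕ} (hij : i ≤ j) (hj : j ≤ L) :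
    diam (F j) ≤ diam (F i) := by
  induction j, hij using Nat.le_induction with
  | base => rfl
  | succ j _ ih =>
    exact ((hP.step j (by omega)).diam_le (hP.isTree (by omega))).trans (ih (by omega))

/-- Later moves of other agents raise the cost of `mover i` at most to their own new costs, which
are bounded in terms of the non-increasing diameter. -/
theorem ecc_mover_le (hP : IsMaxCostPlay F mover L) {i t : ℕ} (hit : i < t) (ht : t ≤ L) :
    ecc (F t) (mover i) ≤ costBound (diam (F i)) := by
  induction t, hit using Nat.le_induction with
  | base => exact (hP.step i (by omega)).ecc_le_costBound (hP.isTree (by omega))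
  | succ t hit ih =>
    have hstep := hP.step t (by omega)
    have hT := hP.isTree (i := t) (by omega)
    refine (hstep.ecc_le_max hT _).trans (max_le (ih (by omega)) ?_)
    exact (hstep.ecc_le_costBound hT).trans (costBound_mono (hP.diam_anti (by omega) (by omega)))

theorem ecc_lt_and_le_half (hP : IsMaxCostPlay F mover L) {i j : ℕ} (hij : i < j) (hj : j < L)
    (hmover : mover i = mover j) :
    ecc (F j) (mover j) < ecc (F i) (mover i) ∧
      ecc (F j) (mover j) ≤ (ecc (F i) (mover i) + 1) / 2 + 1 := by
  have h := hP.ecc_mover_le hij hj.le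
  rw [hmover, ← (hP.step i (by omega)).ecc_eq_diam (hP.isTree (by omega))] at h
  have := (hP.step i (by omega)).three_le_ecc
  unfold costBound at h
  omega

theorem card_moves_le [DecidableEq V] (hP : IsMaxCostPlay F mover L) (x : V) :
    #{i ∈ range L | mover i = x} ≤ Nat.clog 2 (Fintype.card V) + 1 := by
  refine card_le_clog_of_halving (e := fun i => ecc (F i) (mover i) - 2) (fun i hi => ?_)
    (fun i hi => ?_) fun i hi j hj hij => ?_ <;> simp only [mem_filter, mem_range] at *
  · have := ecc_le_card_sub_one (hP.isTree hi.1.le).connected (mover i)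
    omega
  · have := (hP.step i hi.1).three_le_ecc
    omega
  · have := hP.ecc_lt_and_le_half hij hj.1 (hi.2.trans hj.2.symm)
    have := (hP.step j hj.1).three_le_ecc
    omega

theorem length_le [DecidableEq V] (hP : IsMaxCostPlay F mover L) :
    L ≤ Fintype.card V * (Nat.clog 2 (Fintype.card V) + 1) :=
  calc L = ∑ x, #{i ∈ range L | mover i = x} :=
        (card_range L).symm.trans (card_eq_sum_card_fiberwise fun i _ => mem_univ (mover i))
    _ ≤ ∑ _x : V, (Nat.clog 2 (Fintype.card V) + 1) := sum_le_sum fun x _ => hP.card_moves_le x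
    _ = Fintype.card V * (Nat.clog 2 (Fintype.card V) + 1) := by simp

end IsMaxCostPlay

end Play

/-- the Max Swap Game on any n-vertex tree under the max cost
policy converges within O(n log n) moves: any play of max-cost best-response
moves from a tree has length O(n log n). -/
theorem stmt12 :
    ∃ C : ℝ, 0 < C ∧ ∀ n : ℕ, 2 ≤ n →
      ∀ (L : ℕ) (f : Fin (L + 1) → SimpleGraph (Fin n)),
        (f 0).IsTree →
        (∀ i : Fin L, MaxCostBRStep (f i.castSucc) (f i.succ)) →
        (L : ℝ) ≤ C * n * Real.log n := by
  refine ⟨5, by norm_num, fun n hn L f hf0 hsteps => ?_⟩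
  obtain ⟨F, mover, hP⟩ := exists_isMaxCostPlay f hf0 hsteps
  have hL := hP.length_le
  rw [Fintype.card_fin] at hL
  calc (L : ℝ) ≤ n * ((Nat.clog 2 n + 1 : ℕ) : ℝ) := by exact_mod_cast hL
    _ ≤ n * (5 * Real.log n) := by gcongr; exact Nat.clog_two_add_one_le_log hn
    _ = 5 * n * Real.log n := by ring

end NCG
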